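/- arXiv:2511.18605 — 3 statements merged into one kernel-verified Lean document; each statement's English description precedes it below -/
import Mathlib

section
/- Let M be an n×n positive semidefinite Hermitian matrix and β ≥ 0. Then det(M + β·I_n) ≥ Σ_{k=0}^{n} β^k (det M)^{(n-k)/n}. -/
/-! Diagonalising `M` turns both determinants into products over its eigenvalues `λᵢ ≥ 0`. With
`g = (∏ λᵢ)^(1/n)`, the left-hand side is `∑ βᵏ g^(n-k) ≤ (g + β)ⁿ`, and `g + β ≤ (∏ (λᵢ + β))^(1/n)`
is the superadditivity of the geometric mean, which follows from AM-GM applied to the ratios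
`λᵢ / (λᵢ + β)` and `β / (λᵢ + β)`. -/

open scoped BigOperators ComplexOrder

open Finset

theorem sum_pow_mul_pow_le_add_pow {R : Type*} [CommSemiring R] [PartialOrder R] [IsOrderedRing R]
    {x y : R} (hx : 0 ≤ x) (hy : 0 ≤ y) (n : ℕ) :
    ∑ k ∈ range (n + 1), x ^ k * y ^ (n - k) ≤ (x + y) ^ n := by
  rw [add_pow]
  refine sum_le_sum fun k hk => le_mul_of_one_le_right (by positivity) ?_
  simpa using Nat.mono_cast (α := R) (Nat.choose_pos (Nat.lt_succ_iff.mp (mem_range.mp hk)))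

namespace Real

theorem rpow_sub_div_eq_rpow_inv_pow {x : ℝ} (hx : 0 ≤ x) {n k : ℕ} (hk : k ≤ n) :
    x ^ (((n : ℝ) - k) / n) = (x ^ (n : ℝ)⁻¹) ^ (n - k) := by
  rw [← rpow_natCast, ← rpow_mul hx, Nat.cast_sub hk]
  ring_nf

theorem geom_mean_add_geom_mean_le_weighted {ι : Type*} (s : Finset ι) (w a b : ι → ℝ)
    (hw : ∀ i ∈ s, 0 < w i) (hw' : ∑ i ∈ s, w i = 1) (ha : ∀ i ∈ s, 0 ≤ a i)
    (hb : ∀ i ∈ s, 0 ≤ b i) :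
    ∏ i ∈ s, a i ^ w i + ∏ i ∈ s, b i ^ w i ≤ ∏ i ∈ s, (a i + b i) ^ w i := by
  have hprod_nonneg : 0 ≤ ∏ i ∈ s, (a i + b i) ^ w i :=
    prod_nonneg fun i hi => rpow_nonneg (add_nonneg (ha i hi) (hb i hi)) _
  by_cases hzero : ∃ j ∈ s, a j + b j = 0
  · obtain ⟨j, hj, hab⟩ := hzero
    have hvanish (f : ι → ℝ) (hf : f j = 0) : ∏ i ∈ s, f i ^ w i = 0 :=
      prod_eq_zero hj (by rw [hf, zero_rpow (hw j hj).ne'])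
    rw [hvanish a (by linarith [ha j hj, hb j hj]), hvanish b (by linarith [ha j hj, hb j hj]),
      add_zero]
    exact hprod_nonneg
  push Not at hzero
  have hc : ∀ i ∈ s, 0 < a i + b i := fun i hi =>
    (add_nonneg (ha i hi) (hb i hi)).lt_of_ne' (hzero i hi)
  have amgm (f : ι → ℝ) (hf : ∀ i ∈ s, 0 ≤ f i) :
      (∏ i ∈ s, f i ^ w i) / ∏ i ∈ s, (a i + b i) ^ w i ≤ ∑ i ∈ s, w i * (f i / (a i + b i)) := by
    rw [← prod_div_distrib]
    refine (prod_congr rfl fun i hi => ?_).trans_le <| geom_mean_le_arith_mean_weighted s w _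
      (fun i hi => (hw i hi).le) hw' fun i hi => div_nonneg (hf i hi) (hc i hi).le
    exact (div_rpow (hf i hi) (hc i hi).le _).symm
  have hsum : ∑ i ∈ s, w i * (a i / (a i + b i)) + ∑ i ∈ s, w i * (b i / (a i + b i)) = 1 := by
    rw [← sum_add_distrib, ← hw']
    refine sum_congr rfl fun i hi => ?_
    rw [← mul_add, ← add_div, div_self (hc i hi).ne', mul_one]
  have hpos : 0 < ∏ i ∈ s, (a i + b i) ^ w i := prod_pos fun i hi => rpow_pos_of_pos (hc i hi) _
  have := add_le_add (amgm a ha) (amgm b hb)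
  rwa [hsum, ← add_div, div_le_one hpos] at this

theorem add_rpow_inv_card_prod_pow_card_le {ι : Type*} [Fintype ι] {a : ι → ℝ}
    (ha : ∀ i, 0 ≤ a i) {β : ℝ} (hβ : 0 ≤ β) :
    ((∏ i, a i) ^ (Fintype.card ι : ℝ)⁻¹ + β) ^ Fintype.card ι ≤ ∏ i, (a i + β) := by
  set n := Fintype.card ι
  rcases Nat.eq_zero_or_pos n with hn | hn
  · simp [hn, Fintype.card_eq_zero_iff.mp hn]
  have hn' : (n : ℝ) ≠ 0 := by positivity
  have hw : ∑ _i : ι, (n : ℝ)⁻¹ = 1 := by simp [n, hn']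
  have hgm := geom_mean_add_geom_mean_le_weighted univ (fun _ => (n : ℝ)⁻¹) a (fun _ => β)
    (fun _ _ => by positivity) hw (fun i _ => ha i) fun _ _ => hβ
  rw [finsetProd_rpow _ _ fun i _ => ha i, finsetProd_rpow _ _ fun i _ => add_nonneg (ha i) hβ,
    prod_const, card_univ, ← rpow_natCast, ← rpow_mul hβ, inv_mul_cancel₀ hn', rpow_one] at hgm
  calc _ ≤ ((∏ i, (a i + β)) ^ (n : ℝ)⁻¹) ^ n :=
        pow_le_pow_left₀ (add_nonneg (rpow_nonneg (prod_nonneg fun i _ => ha i) _) hβ) hgm n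
    _ = ∏ i, (a i + β) := rpow_inv_natCast_pow (prod_nonneg fun i _ => add_nonneg (ha i) hβ) hn.ne'

end Real

open Matrix Unitary in
theorem Matrix.IsHermitian.det_add_smul_one {𝕜 n : Type*} [RCLike 𝕜] [Fintype n] [DecidableEq n]
    {A : Matrix n n 𝕜} (hA : A.IsHermitian) (β : ℝ) :
    (A + β • 1).det = ∏ i, ((hA.eigenvalues i + β : ℝ) : 𝕜) := by
  set U := hA.eigenvectorUnitary
  have hU : (U : Matrix n n 𝕜) * star (U : Matrix n n 𝕜) = 1 := mem_unitaryGroup_iff.mp U.2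
  have hconj : A + β • 1 =
      conjStarAlgAut 𝕜 _ U (diagonal (RCLike.ofReal ∘ hA.eigenvalues) + β • 1) := by
    rw [map_add, ← hA.spectral_theorem, conjStarAlgAut_apply, Matrix.mul_smul, Matrix.smul_mul,
      mul_one, hU]
  rw [hconj, conjStarAlgAut_apply, det_mul, det_mul, mul_right_comm, ← det_mul, hU, det_one,
    one_mul, RCLike.real_smul_eq_coe_smul (K := 𝕜), smul_one_eq_diagonal, diagonal_add,
    det_diagonal]
  simp

theorem det_add_smul_one_ge_sum_general (n : ℕ) (M : Matrix (Fin n) (Fin n) ℂ)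
    (hM : M.PosSemidef) (β : ℝ) (hβ : 0 ≤ β) :
    ∑ k ∈ Finset.range (n + 1),
      β ^ k * (M.det.re) ^ (((n : ℝ) - (k : ℝ)) / (n : ℝ)) ≤ (M + β • 1).det.re := by
  have hl := hM.eigenvalues_nonneg
  have hdet : M.det.re = ∏ i, hM.isHermitian.eigenvalues i := by
    rw [hM.isHermitian.det_eq_prod_eigenvalues]
    norm_cast
  have hdet_add : (M + β • 1).det.re = ∏ i, (hM.isHermitian.eigenvalues i + β) := by
    rw [hM.isHermitian.det_add_smul_one]
    norm_cast
  set g := (∏ i, hM.isHermitian.eigenvalues i) ^ (n : ℝ)⁻¹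
  have hg : 0 ≤ g := Real.rpow_nonneg (prod_nonneg fun i _ => hl i) _
  rw [hdet, hdet_add]
  calc _ = ∑ k ∈ range (n + 1), β ^ k * g ^ (n - k) :=
        sum_congr rfl fun k hk => by
          rw [Real.rpow_sub_div_eq_rpow_inv_pow (prod_nonneg fun i _ => hl i)
            (Nat.lt_succ_iff.mp (mem_range.mp hk))]
    _ ≤ (β + g) ^ n := sum_pow_mul_pow_le_add_pow hβ hg n
    _ ≤ _ := by
      rw [add_comm]
      simpa only [Fintype.card_fin] using Real.add_rpow_inv_card_prod_pow_card_le hl hβ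

/-- **Lemma (Ha–Khanh).** If `M` is an `n × n` positive semidefinite Hermitian matrix and
`β ≥ 0`, then `det (M + β • I) ≥ ∑_{k=0}^{n} β^k (det M)^{(n-k)/n}`. The determinants of
positive semidefinite Hermitian matrices are nonnegative reals; we state the inequality for
their real parts. -/
theorem det_add_smul_one_ge_sum (n : ℕ) (hn : 0 < n) (M : Matrix (Fin n) (Fin n) ℂ)
    (hM : M.PosSemidef) (β : ℝ) (hβ : 0 ≤ β) :
    ∑ k ∈ Finset.range (n + 1),
      β ^ k * (M.det.re) ^ (((n : ℝ) - (k : ℝ)) / (n : ℝ)) ≤ (M + β • 1).det.re :=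
  det_add_smul_one_ge_sum_general n M hM β hβ
end

section
/- Let Ω ⊆ ℂ^n be a bounded domain, ψ a C^{1,1}-smooth real-valued function on a neighborhood of cl(Ω), and ρ a continuous plurisubharmonic function on Ω extending continuously to cl(Ω) such that ρ(z) − ‖z‖² is plurisubharmonic on Ω. Then there exists K > 0 such that ψ + Kρ is plurisubharmonic on Ω and continuous on cl(Ω). -/
open scoped BigOperators

noncomputable section

/-- A function `u` is plurisubharmonic on `Ω ⊆ ℂⁿ` if it is upper semicontinuous on `Ω`
and satisfies the sub-mean value inequality over circles on every complex line whose
corresponding closed disc lies in `Ω`. -/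
def PSH {n : ℕ} (Ω : Set (EuclideanSpace ℂ (Fin n))) (u : EuclideanSpace ℂ (Fin n) → ℝ) :
    Prop :=
  UpperSemicontinuousOn u Ω ∧
    ∀ (a b : EuclideanSpace ℂ (Fin n)) (r : ℝ), 0 < r →
      (∀ t : ℂ, ‖t‖ ≤ r → a + t • b ∈ Ω) →
      u a ≤ (2 * Real.pi)⁻¹ *
        ∫ θ in (0 : ℝ)..(2 * Real.pi), u (a + ((r : ℂ) * Complex.exp (θ * Complex.I)) • b)

/-! On a complex line `t ↦ a + t • b`, the first-order Taylor term of `ψ` at `a` is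
real-linear in `t`, so it averages to zero over circles, while the remainder is at most
`L r² ‖b‖²` on the circle of radius `r`. The circle average of `‖a + t • b‖²` exceeds `‖a‖²` by
exactly `r² ‖b‖²`, so `ψ + K ‖z‖²` has the sub-mean value property as soon as `K ≥ L`. Then
`ψ + K ρ = (ψ + K ‖z‖²) + K (ρ - ‖z‖²)` is a sum of two such functions, and continuity up to
the boundary gives upper semicontinuity. -/

open Real Complex Metric Set

theorem circleAverage_eq_zero_of_odd {E : Type*} [NormedAddCommGroup E] [NormedSpace ℝ E]
    {f : ℂ → E} (hf : ∀ z, f (-z) = -f z) (R : ℝ) : circleAverage f 0 R = 0 := by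
  have h : circleAverage f 0 (-R) = -circleAverage f 0 R := by
    simp [circleAverage_def, circleMap_zero, hf, intervalIntegral.integral_neg]
  rw [circleAverage_neg_radius] at h
  have h2 : (2 : ℝ) • circleAverage f 0 R = 0 := by
    rw [two_smul]
    nth_rw 1 [h]
    exact neg_add_cancel _
  exact (smul_eq_zero.1 h2).resolve_left two_ne_zero

theorem norm_sub_sub_fderivWithin_le_of_lipschitzOnWith {E F : Type*}
    [NormedAddCommGroup E] [NormedSpace ℝ E] [NormedAddCommGroup F] [NormedSpace ℝ F]
    {f : E → F} {V : Set E} (hf : DifferentiableOn ℝ f V) {L : NNReal}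
    (hlip : LipschitzOnWith L (fderivWithin ℝ f V) V) {x y : E} (hxy : segment ℝ x y ⊆ V) :
    ‖f y - f x - fderivWithin ℝ f V x (y - x)‖ ≤ L * ‖y - x‖ ^ 2 := by
  set D := fderivWithin ℝ f V x
  have hx : x ∈ V := hxy (left_mem_segment ℝ x y)
  have hderiv : ∀ z ∈ segment ℝ x y,
      HasFDerivWithinAt (fun z => f z - D z) (fderivWithin ℝ f V z - D) (segment ℝ x y) z :=
    fun z hz => ((hf z (hxy hz)).hasFDerivWithinAt.mono hxy).sub D.hasFDerivWithinAt
  have hbound : ∀ z ∈ segment ℝ x y, ‖fderivWithin ℝ f V z - D‖ ≤ L * ‖y - x‖ := by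
    intro z hz
    calc ‖fderivWithin ℝ f V z - D‖ ≤ L * ‖z - x‖ := by
          simpa only [dist_eq_norm] using hlip.dist_le_mul z (hxy hz) x hx
      _ ≤ L * ‖y - x‖ := by
          gcongr
          exact norm_sub_le_of_mem_segment hz
  calc ‖f y - f x - D (y - x)‖ = ‖(f y - D y) - (f x - D x)‖ := by
        rw [map_sub]
        congr 1
        abel
    _ ≤ L * ‖y - x‖ * ‖y - x‖ :=
        (convex_segment x y).norm_image_sub_le_of_norm_hasFDerivWithin_le hderiv hbound
          (left_mem_segment ℝ x y) (right_mem_segment ℝ x y)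
    _ = L * ‖y - x‖ ^ 2 := by ring

theorem circleAverage_add_const_mul {f g : ℂ → ℝ} {c : ℂ} {R : ℝ} (K : ℝ)
    (hf : CircleIntegrable f c R) (hg : CircleIntegrable g c R) :
    circleAverage (fun z => f z + K * g z) c R
      = circleAverage f c R + K * circleAverage g c R := by
  have hKg : CircleIntegrable (fun z => K * g z) c R := hg.const_smul (a := K)
  rw [circleAverage_fun_add hf hKg]
  congr 1
  exact circleAverage_fun_smul (𝕜 := ℝ)

section ComplexLine

variable {E : Type*} [NormedAddCommGroup E] [NormedSpace ℂ E]

theorem intervalIntegral_circle_eq_circleAverage (u : E → ℝ) (a b : E) (r : ℝ) :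
    (2 * π)⁻¹ * ∫ θ in (0 : ℝ)..(2 * π), u (a + ((r : ℂ) * exp (θ * I)) • b)
      = circleAverage (fun t : ℂ => u (a + t • b)) 0 r := by
  simp only [circleAverage_def, circleMap_zero, smul_eq_mul]

theorem ContinuousOn.circleIntegrable_comp_add_smul {F : Type*} [NormedAddCommGroup F]
    {u : E → F} {S : Set E} (hu : ContinuousOn u S) {a b : E} {R : ℝ}
    (hdisc : ∀ t : ℂ, ‖t‖ ≤ |R| → a + t • b ∈ S) :
    CircleIntegrable (fun t : ℂ => u (a + t • b)) 0 R :=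
  (hu.comp (by fun_prop : Continuous fun t : ℂ => a + t • b).continuousOn
    fun t ht => hdisc t (mem_sphere_zero_iff_norm.1 ht).le).circleIntegrable'

theorem segment_subset_of_forall_norm_le {a b : E} {R : ℝ} {S : Set E}
    (hdisc : ∀ t : ℂ, ‖t‖ ≤ R → a + t • b ∈ S) {t : ℂ} (ht : ‖t‖ ≤ R) :
    segment ℝ a (a + t • b) ⊆ S := by
  rw [segment_eq_image']
  rintro _ ⟨s, hs, rfl⟩
  dsimp only
  rw [add_sub_cancel_left, ← Complex.coe_smul, smul_smul]
  apply hdisc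
  rw [norm_mul, Complex.norm_of_nonneg hs.1]
  exact (mul_le_of_le_one_left (norm_nonneg t) hs.2).trans ht

end ComplexLine

section InnerProduct

variable {E : Type*} [NormedAddCommGroup E] [InnerProductSpace ℂ E]

theorem circleAverage_norm_add_smul_sq (a b : E) (R : ℝ) :
    circleAverage (fun t : ℂ => ‖a + t • b‖ ^ 2) 0 R = ‖a‖ ^ 2 + R ^ 2 * ‖b‖ ^ 2 := by
  have hsphere : EqOn (fun t : ℂ => ‖a + t • b‖ ^ 2)
      (fun t => (‖a‖ ^ 2 + R ^ 2 * ‖b‖ ^ 2) + 2 * RCLike.re (inner ℂ a (t • b)))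
      (sphere 0 |R|) := by
    intro t ht
    rw [mem_sphere_zero_iff_norm] at ht
    dsimp only
    rw [@norm_add_sq ℂ, norm_smul, ht, mul_pow, sq_abs]
    ring
  have hinner : CircleIntegrable (fun t : ℂ => 2 * RCLike.re (inner ℂ a (t • b))) 0 R :=
    (by fun_prop : Continuous _).continuousOn.circleIntegrable'
  rw [circleAverage_congr_sphere hsphere,
    circleAverage_fun_add (circleIntegrable_const _ _ _) hinner, circleAverage_const,
    circleAverage_eq_zero_of_odd (fun t => by simp only [neg_smul, inner_neg_right, map_neg,
      mul_neg]), add_zero]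

theorem le_circleAverage_add_mul_norm_sq {ψ : E → ℝ} {V : Set E} (hψ : DifferentiableOn ℝ ψ V)
    {L : NNReal} (hlip : LipschitzOnWith L (fderivWithin ℝ ψ V) V) {K : ℝ} (hLK : L ≤ K)
    {a b : E} {R : ℝ} (hdisc : ∀ t : ℂ, ‖t‖ ≤ |R| → a + t • b ∈ V) :
    ψ a + K * ‖a‖ ^ 2 ≤ circleAverage (fun t : ℂ => ψ (a + t • b) + K * ‖a + t • b‖ ^ 2) 0 R := by
  set D := fderivWithin ℝ ψ V a
  have hψint := hψ.continuousOn.circleIntegrable_comp_add_smul hdisc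
  have hDint : CircleIntegrable (fun t : ℂ => D (t • b)) 0 R :=
    (by fun_prop : Continuous fun t : ℂ => D (t • b)).continuousOn.circleIntegrable'
  have htaylor : ∀ t ∈ sphere (0 : ℂ) |R|,
      ψ a - L * (R ^ 2 * ‖b‖ ^ 2) + D (t • b) ≤ ψ (a + t • b) := by
    intro t ht
    rw [mem_sphere_zero_iff_norm] at ht
    have h := norm_sub_sub_fderivWithin_le_of_lipschitzOnWith hψ hlip
      (segment_subset_of_forall_norm_le hdisc ht.le)
    rw [add_sub_cancel_left, norm_smul, ht, mul_pow, sq_abs, Real.norm_eq_abs] at h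
    linarith [(abs_le.1 h).1]
  have hψmean : ψ a - L * (R ^ 2 * ‖b‖ ^ 2) ≤ circleAverage (fun t : ℂ => ψ (a + t • b)) 0 R :=
    calc ψ a - L * (R ^ 2 * ‖b‖ ^ 2)
        = circleAverage (fun t : ℂ => ψ a - L * (R ^ 2 * ‖b‖ ^ 2) + D (t • b)) 0 R := by
          rw [circleAverage_fun_add (circleIntegrable_const _ _ _) hDint, circleAverage_const,
            circleAverage_eq_zero_of_odd (fun t => by simp only [neg_smul, map_neg]), add_zero]
      _ ≤ circleAverage (fun t : ℂ => ψ (a + t • b)) 0 R :=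
          circleAverage_mono ((circleIntegrable_const _ _ _).add hDint) hψint htaylor
  have hnormint : CircleIntegrable (fun t : ℂ => ‖a + t • b‖ ^ 2) 0 R :=
    (by fun_prop : Continuous fun t : ℂ => ‖a + t • b‖ ^ 2).continuousOn.circleIntegrable'
  rw [circleAverage_add_const_mul K hψint hnormint, circleAverage_norm_add_smul_sq]
  nlinarith [mul_le_mul_of_nonneg_right hLK (by positivity : 0 ≤ R ^ 2 * ‖b‖ ^ 2)]

end InnerProduct

theorem psh_of_C11_plus_K_rho_general {n : ℕ} (Ω : Set (EuclideanSpace ℂ (Fin n)))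
    (V : Set (EuclideanSpace ℂ (Fin n))) (hV : closure Ω ⊆ V)
    (ψ : EuclideanSpace ℂ (Fin n) → ℝ)
    (hψ : ContDiffOn ℝ 1 ψ V)
    (L : NNReal) (hψlip : LipschitzOnWith L (fun z => fderivWithin ℝ ψ V z) V)
    (ρ : EuclideanSpace ℂ (Fin n) → ℝ)
    (hρcont : ContinuousOn ρ (closure Ω))
    (hρsq : PSH Ω (fun z => ρ z - ‖z‖ ^ 2)) :
    ∃ K > (0 : ℝ), PSH Ω (fun z => ψ z + K * ρ z) ∧
      ContinuousOn (fun z => ψ z + K * ρ z) (closure Ω) := by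
  set K : ℝ := L + 1
  have hcont : ContinuousOn (fun z => ψ z + K * ρ z) (closure Ω) :=
    (hψ.continuousOn.mono hV).add (continuousOn_const.mul hρcont)
  refine ⟨K, by positivity,
    ⟨(hcont.mono subset_closure).upperSemicontinuousOn, fun a b r hr hmem => ?_⟩, hcont⟩
  have hdisc : ∀ t : ℂ, ‖t‖ ≤ |r| → a + t • b ∈ closure Ω :=
    fun t ht => subset_closure (hmem t (abs_of_pos hr ▸ ht))
  have hψK := le_circleAverage_add_mul_norm_sq (hψ.differentiableOn one_ne_zero) hψlip
    (le_add_of_nonneg_right zero_le_one : (L : ℝ) ≤ K) fun t ht => hV (hdisc t ht)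
  have hρ := (hρsq.2 a b r hr hmem).trans_eq
    (intervalIntegral_circle_eq_circleAverage (fun z => ρ z - ‖z‖ ^ 2) a b r)
  have hψint : CircleIntegrable (fun t : ℂ => ψ (a + t • b) + K * ‖a + t • b‖ ^ 2) 0 r :=
    ContinuousOn.circleIntegrable_comp_add_smul (u := fun z => ψ z + K * ‖z‖ ^ 2)
      (hψ.continuousOn.add (by fun_prop)) fun t ht => hV (hdisc t ht)
  have hρint : CircleIntegrable (fun t : ℂ => ρ (a + t • b) - ‖a + t • b‖ ^ 2) 0 r :=
    ContinuousOn.circleIntegrable_comp_add_smul (u := fun z => ρ z - ‖z‖ ^ 2) (by fun_prop) hdisc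
  refine le_of_le_of_eq ?_
    (intervalIntegral_circle_eq_circleAverage (fun z => ψ z + K * ρ z) a b r).symm
  calc ψ a + K * ρ a = (ψ a + K * ‖a‖ ^ 2) + K * (ρ a - ‖a‖ ^ 2) := by ring
    _ ≤ circleAverage (fun t : ℂ => ψ (a + t • b) + K * ‖a + t • b‖ ^ 2) 0 r
        + K * circleAverage (fun t : ℂ => ρ (a + t • b) - ‖a + t • b‖ ^ 2) 0 r := by gcongr
    _ = circleAverage (fun t : ℂ => ψ (a + t • b) + K * ρ (a + t • b)) 0 r := by
        rw [← circleAverage_add_const_mul K hψint hρint]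
        congr 1
        funext t
        ring

/-- **Lemma 3.2.** Let `Ω ⊆ ℂⁿ` be a bounded domain, `ψ` a `C^{1,1}`-smooth real-valued
function on an open neighbourhood `V` of `cl Ω` (i.e. `C¹` with Lipschitz derivative),
and `ρ` a continuous plurisubharmonic function on `Ω`, continuous on `cl Ω`, with
`ρ(z) - ‖z‖²` plurisubharmonic on `Ω`. Then for sufficiently large `K > 0`, the function
`ψ + K ρ` is plurisubharmonic on `Ω` and continuous on `cl Ω`. -/
theorem psh_of_C11_plus_K_rho {n : ℕ} (Ω : Set (EuclideanSpace ℂ (Fin n)))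
    (hΩopen : IsOpen Ω) (hΩconn : IsConnected Ω) (hΩbdd : Bornology.IsBounded Ω)
    (V : Set (EuclideanSpace ℂ (Fin n))) (hVopen : IsOpen V) (hV : closure Ω ⊆ V)
    (ψ : EuclideanSpace ℂ (Fin n) → ℝ)
    (hψ : ContDiffOn ℝ 1 ψ V)
    (L : NNReal) (hψlip : LipschitzOnWith L (fun z => fderivWithin ℝ ψ V z) V)
    (ρ : EuclideanSpace ℂ (Fin n) → ℝ)
    (hρpsh : PSH Ω ρ) (hρcont : ContinuousOn ρ (closure Ω))
    (hρsq : PSH Ω (fun z => ρ z - ‖z‖ ^ 2)) :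
    ∃ K > (0 : ℝ), PSH Ω (fun z => ψ z + K * ρ z) ∧
      ContinuousOn (fun z => ψ z + K * ρ z) (closure Ω) :=
  psh_of_C11_plus_K_rho_general Ω V hV ψ hψ L hψlip ρ hρcont hρsq
end
end

section
/- Let Ω ⊊ ℂ^n be a bounded domain such that for some ε ∈ (0,1] the Dirichlet problem for the homogeneous complex Monge–Ampère equation with boundary data φ(z) = −‖z‖² admits a solution u_φ that is plurisubharmonic on Ω, ε-Hölder continuous on cl(Ω), maximal (i.e., (dd^c u_φ)^n = 0), and equal to φ on ∂Ω. Then ρ(z) := u_φ(z) + ‖z‖² is plurisubharmonic on Ω, ε-Hölder continuous on cl(Ω), satisfies ρ = 0 on ∂Ω, ρ < 0 on Ω, and ρ(z) − ‖z‖² is plurisubharmonic on Ω. -/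
/-!
With `ρ = u + ‖z‖²`, the function `u + ρ = 2u + ‖z‖²` is plurisubharmonic (because `‖z‖²` is)
and agrees with `u` on `∂Ω`, so maximality of `u` gives `u + ρ ≤ u`, i.e. `ρ ≤ 0` on `Ω`.
Strict negativity at `z ∈ Ω` follows from the sub-mean value inequality of `u` on a circle of
radius `δ` around `z`: there `u ≤ -‖·‖²`, whose circle mean is `-‖z‖² - δ²`. Finally `ρ` is
`ε`-Hölder since `‖z‖²` is Lipschitz on the bounded set `cl Ω` and `ε ≤ 1`.
-/

open scoped BigOperators

noncomputable section

open Complex MeasureTheory Bornology Metric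
open scoped NNReal

section Holder

variable {X : Type*} [SeminormedAddCommGroup X] {s : Set X} {ε : ℝ} {f g : X → ℝ}

def HolderOn (s : Set X) (ε : ℝ) (f : X → ℝ) : Prop :=
  ∃ C > (0 : ℝ), ∀ x ∈ s, ∀ y ∈ s, |f x - f y| ≤ C * ‖x - y‖ ^ ε

lemma HolderOn.add (hf : HolderOn s ε f) (hg : HolderOn s ε g) : HolderOn s ε (f + g) := by
  obtain ⟨C, hC, hfC⟩ := hf
  obtain ⟨C', hC', hgC'⟩ := hg
  refine ⟨C + C', add_pos hC hC', fun x hx y hy => ?_⟩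
  calc |(f + g) x - (f + g) y| = |(f x - f y) + (g x - g y)| := by
        rw [Pi.add_apply, Pi.add_apply, add_sub_add_comm]
    _ ≤ |f x - f y| + |g x - g y| := abs_add_le _ _
    _ ≤ C * ‖x - y‖ ^ ε + C' * ‖x - y‖ ^ ε := add_le_add (hfC x hx y hy) (hgC' x hx y hy)
    _ = (C + C') * ‖x - y‖ ^ ε := by ring

lemma HolderOnWith.holderOn {C r : ℝ≥0} (hf : HolderOnWith C r f s) : HolderOn s r f := by
  refine ⟨C + 1, by positivity, fun x hx y hy => ?_⟩
  calc |f x - f y| = dist (f x) (f y) := (Real.dist_eq _ _).symm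
    _ ≤ C * dist x y ^ (r : ℝ) := hf.dist_le hx hy
    _ ≤ (C + 1) * ‖x - y‖ ^ (r : ℝ) := by
      rw [dist_eq_norm]; gcongr; linarith

lemma ContDiff.holderOn_of_isBounded {E : Type*} [NormedAddCommGroup E] [NormedSpace ℝ E]
    [ProperSpace E] {s : Set E} {f : E → ℝ} (hf : ContDiff ℝ 1 f) (hs : IsBounded s) (hε₀ : 0 ≤ ε)
    (hε₁ : ε ≤ 1) : HolderOn s ε f := by
  obtain ⟨K, hK⟩ := hf.locallyLipschitz.locallyLipschitzOn.exists_lipschitzOnWith_of_compact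
    hs.isCompact_closure
  have hD : ∀ x ∈ s, ∀ y ∈ s, edist x y ≤ (ediam s).toNNReal := fun x hx y hy => by
    rw [ENNReal.coe_toNNReal hs.ediam_ne_top]
    exact edist_le_ediam_of_mem hx hy
  exact ((hK.mono subset_closure).holderOnWith.of_le hD (r := 1) (s := ⟨ε, hε₀⟩) hε₁).holderOn

end Holder

section CircleMean

variable {E : Type*} [NormedAddCommGroup E] [NormedSpace ℂ E]

def lineCircleMean (u : E → ℝ) (a b : E) (r : ℝ) : ℝ :=
  (2 * Real.pi)⁻¹ * ∫ θ in (0 : ℝ)..(2 * Real.pi), u (a + ((r : ℂ) * exp (θ * I)) • b)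

lemma norm_ofReal_mul_exp_mul_I (r θ : ℝ) : ‖(r : ℂ) * exp (θ * I)‖ = |r| := by
  rw [norm_mul, norm_exp_ofReal_mul_I, mul_one, norm_real, Real.norm_eq_abs]

lemma ContinuousOn.continuous_comp_circle {Ω : Set E} {u : E → ℝ} (hu : ContinuousOn u Ω)
    {a b : E} {r : ℝ} (hr : 0 ≤ r) (hmem : ∀ t : ℂ, ‖t‖ ≤ r → a + t • b ∈ Ω) :
    Continuous fun θ : ℝ => u (a + ((r : ℂ) * exp (θ * I)) • b) :=
  hu.comp_continuous (by fun_prop) fun θ =>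
    hmem _ (by rw [norm_ofReal_mul_exp_mul_I, abs_of_nonneg hr])

lemma lineCircleMean_add {u v : E → ℝ} {a b : E} {r : ℝ}
    (hu : Continuous fun θ : ℝ => u (a + ((r : ℂ) * exp (θ * I)) • b))
    (hv : Continuous fun θ : ℝ => v (a + ((r : ℂ) * exp (θ * I)) • b)) :
    lineCircleMean (u + v) a b r = lineCircleMean u a b r + lineCircleMean v a b r := by
  simp only [lineCircleMean, Pi.add_apply]
  rw [intervalIntegral.integral_add (hu.intervalIntegrable _ _) (hv.intervalIntegrable _ _),
    mul_add]

lemma lineCircleMean_neg (u : E → ℝ) (a b : E) (r : ℝ) :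
    lineCircleMean (-u) a b r = -lineCircleMean u a b r := by
  simp only [lineCircleMean, Pi.neg_apply, intervalIntegral.integral_neg, mul_neg]

lemma lineCircleMean_mono {u v : E → ℝ} {a b : E} {r : ℝ}
    (hu : Continuous fun θ : ℝ => u (a + ((r : ℂ) * exp (θ * I)) • b))
    (hv : Continuous fun θ : ℝ => v (a + ((r : ℂ) * exp (θ * I)) • b))
    (huv : ∀ θ : ℝ, u (a + ((r : ℂ) * exp (θ * I)) • b) ≤ v (a + ((r : ℂ) * exp (θ * I)) • b)) :
    lineCircleMean u a b r ≤ lineCircleMean v a b r := by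
  unfold lineCircleMean
  gcongr
  exact intervalIntegral.integral_mono_on Real.two_pi_pos.le (hu.intervalIntegrable _ _)
    (hv.intervalIntegrable _ _) fun θ _ => huv θ

end CircleMean

lemma lineCircleMean_norm_sq {E : Type*} [NormedAddCommGroup E] [InnerProductSpace ℂ E]
    (a b : E) (r : ℝ) : lineCircleMean (fun z => ‖z‖ ^ 2) a b r = ‖a‖ ^ 2 + r ^ 2 * ‖b‖ ^ 2 := by
  set k : ℂ := inner ℂ a b
  have hexpand : ∀ θ : ℝ, ‖a + ((r : ℂ) * exp (θ * I)) • b‖ ^ 2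
      = (‖a‖ ^ 2 + r ^ 2 * ‖b‖ ^ 2) + (2 * r * k.re) * Real.cos θ
        + (-(2 * r * k.im)) * Real.sin θ := by
    intro θ
    rw [norm_add_sq (𝕜 := ℂ), inner_smul_right, norm_smul, norm_ofReal_mul_exp_mul_I,
      mul_pow, sq_abs, RCLike.re_to_complex]
    simp only [mul_re, mul_im, ofReal_re, ofReal_im, exp_ofReal_mul_I_re, exp_ofReal_mul_I_im]
    ring
  have hcos : IntervalIntegrable (fun θ : ℝ => (2 * r * k.re) * Real.cos θ) volume 0
      (2 * Real.pi) := (by fun_prop : Continuous _).intervalIntegrable _ _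
  have hsin : IntervalIntegrable (fun θ : ℝ => (-(2 * r * k.im)) * Real.sin θ) volume 0
      (2 * Real.pi) := (by fun_prop : Continuous _).intervalIntegrable _ _
  simp only [lineCircleMean, hexpand]
  rw [intervalIntegral.integral_add (intervalIntegrable_const.add hcos) hsin,
    intervalIntegral.integral_add intervalIntegrable_const hcos, intervalIntegral.integral_const,
    intervalIntegral.integral_const_mul, intervalIntegral.integral_const_mul, integral_cos,
    integral_sin]
  simp only [sub_zero, smul_eq_mul, Real.sin_two_pi, Real.sin_zero, Real.cos_zero,
    Real.cos_two_pi, sub_self, mul_zero, add_zero]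
  field_simp

section PSH

variable {n : ℕ} {Ω : Set (EuclideanSpace ℂ (Fin n))} {u v : EuclideanSpace ℂ (Fin n) → ℝ}

lemma PSH.add (hu : PSH Ω u) (hv : PSH Ω v) (huc : ContinuousOn u Ω) (hvc : ContinuousOn v Ω) :
    PSH Ω (u + v) := by
  refine ⟨(huc.add hvc).upperSemicontinuousOn, fun a b r hr hmem => ?_⟩
  change u a + v a ≤ lineCircleMean (u + v) a b r
  rw [lineCircleMean_add (huc.continuous_comp_circle hr.le hmem)
    (hvc.continuous_comp_circle hr.le hmem)]
  exact add_le_add (hu.2 a b r hr hmem) (hv.2 a b r hr hmem)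

lemma psh_norm_sq (Ω : Set (EuclideanSpace ℂ (Fin n))) : PSH Ω fun z => ‖z‖ ^ 2 := by
  refine ⟨(by fun_prop : Continuous fun z : EuclideanSpace ℂ (Fin n) => ‖z‖ ^ 2)
    |>.continuousOn.upperSemicontinuousOn, fun a b r _ _ => ?_⟩
  change ‖a‖ ^ 2 ≤ lineCircleMean (fun z => ‖z‖ ^ 2) a b r
  rw [lineCircleMean_norm_sq]
  exact le_add_of_nonneg_right (by positivity)

lemma PSH.lt_neg_norm_sq (hu : PSH Ω u) (huc : ContinuousOn u Ω) (hΩ : IsOpen Ω) (hn : 0 < n)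
    (hle : ∀ z ∈ Ω, u z ≤ -‖z‖ ^ 2) {z : EuclideanSpace ℂ (Fin n)} (hz : z ∈ Ω) :
    u z < -‖z‖ ^ 2 := by
  obtain ⟨δ, hδ, hball⟩ := isOpen_iff.mp hΩ z hz
  set e : EuclideanSpace ℂ (Fin n) := EuclideanSpace.single ⟨0, hn⟩ 1
  have he : ‖e‖ = 1 := by simp [e]
  have hmem : ∀ t : ℂ, ‖t‖ ≤ δ / 2 → z + t • e ∈ Ω := fun t ht => hball <| by
    rw [mem_ball, dist_eq_norm, add_sub_cancel_left, norm_smul, he, mul_one]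
    linarith
  have hmean : lineCircleMean u z e (δ / 2) ≤ lineCircleMean (fun w => -‖w‖ ^ 2) z e (δ / 2) :=
    lineCircleMean_mono (huc.continuous_comp_circle (by positivity) hmem) (by fun_prop)
      fun θ => hle _ (hmem _ (by rw [norm_ofReal_mul_exp_mul_I, abs_of_pos (by positivity)]))
  have hneg : lineCircleMean (fun w => -‖w‖ ^ 2) z e (δ / 2)
      = -(‖z‖ ^ 2 + (δ / 2) ^ 2 * ‖e‖ ^ 2) := by
    rw [← lineCircleMean_norm_sq]
    exact lineCircleMean_neg _ _ _ _
  have hsub : u z ≤ lineCircleMean u z e (δ / 2) := hu.2 z e (δ / 2) (by positivity) hmem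
  rw [hneg, he, one_pow, mul_one] at hmean
  linarith [pow_pos (half_pos hδ) 2]

end PSH

theorem defining_function_from_holder_solution_general {n : ℕ} (hn : 2 ≤ n)
    (Ω : Set (EuclideanSpace ℂ (Fin n)))
    (hΩopen : IsOpen Ω) (hΩbdd : Bornology.IsBounded Ω)
    (ε : ℝ) (hε : ε ∈ Set.Ioc (0 : ℝ) 1)
    (u : EuclideanSpace ℂ (Fin n) → ℝ)
    (hupsh : PSH Ω u) (hucont : ContinuousOn u (closure Ω))
    (huholder : ∃ C > (0 : ℝ), ∀ x ∈ closure Ω, ∀ y ∈ closure Ω,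
      |u x - u y| ≤ C * ‖x - y‖ ^ ε)
    (humax : ∀ v : EuclideanSpace ℂ (Fin n) → ℝ, PSH Ω v → ContinuousOn v (closure Ω) →
      (∀ ζ ∈ frontier Ω, v ζ ≤ u ζ) → ∀ z ∈ Ω, v z ≤ u z)
    (hubdry : ∀ ζ ∈ frontier Ω, u ζ = -‖ζ‖ ^ 2) :
    PSH Ω (fun z => u z + ‖z‖ ^ 2) ∧
      (∃ C > (0 : ℝ), ∀ x ∈ closure Ω, ∀ y ∈ closure Ω,
        |(u x + ‖x‖ ^ 2) - (u y + ‖y‖ ^ 2)| ≤ C * ‖x - y‖ ^ ε) ∧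
      (∀ ζ ∈ frontier Ω, u ζ + ‖ζ‖ ^ 2 = 0) ∧
      (∀ z ∈ Ω, u z + ‖z‖ ^ 2 < 0) ∧
      PSH Ω (fun z => (u z + ‖z‖ ^ 2) - ‖z‖ ^ 2) := by
  set ρ : EuclideanSpace ℂ (Fin n) → ℝ := fun z => u z + ‖z‖ ^ 2
  have hucΩ : ContinuousOn u Ω := hucont.mono subset_closure
  have hsq : Continuous fun z : EuclideanSpace ℂ (Fin n) => ‖z‖ ^ 2 := by fun_prop
  have hρc : ContinuousOn ρ (closure Ω) := hucont.add hsq.continuousOn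
  have hρpsh : PSH Ω ρ := hupsh.add (psh_norm_sq Ω) hucΩ hsq.continuousOn
  have hρbdry : ∀ ζ ∈ frontier Ω, ρ ζ = 0 := fun ζ hζ => by simp [ρ, hubdry ζ hζ]
  have hρle : ∀ z ∈ Ω, u z ≤ -‖z‖ ^ 2 := fun z hz => by
    have := humax (u + ρ) (hupsh.add hρpsh hucΩ (hρc.mono subset_closure))
      (hucont.add hρc) (fun ζ hζ => by simp [hρbdry ζ hζ]) z hz
    simp only [Pi.add_apply, ρ] at this
    linarith
  refine ⟨hρpsh, HolderOn.add huholder ((contDiff_norm_sq ℝ).holderOn_of_isBounded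
    hΩbdd.closure hε.1.le hε.2), hρbdry, fun z hz => ?_, by simpa using hupsh⟩
  linarith [hupsh.lt_neg_norm_sq hucΩ hΩopen (by omega) hρle hz]

/-- **Theorem 1.1, (b) ⇒ (a).** Suppose the Dirichlet problem for the homogeneous complex
Monge–Ampère equation on the bounded domain `Ω ⊊ ℂⁿ` with boundary data `φ(z) = -‖z‖²`
has a solution `u` that is plurisubharmonic on `Ω`, `ε`-Hölder on `cl Ω`, maximal, and
equal to `φ` on `∂Ω`. Then `ρ(z) := u z + ‖z‖²` is plurisubharmonic on `Ω`, `ε`-Hölder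
on `cl Ω`, vanishes on `∂Ω`, is negative on `Ω`, and `ρ(z) - ‖z‖²` is plurisubharmonic. -/
theorem defining_function_from_holder_solution {n : ℕ} (hn : 2 ≤ n)
    (Ω : Set (EuclideanSpace ℂ (Fin n)))
    (hΩopen : IsOpen Ω) (hΩconn : IsConnected Ω) (hΩbdd : Bornology.IsBounded Ω)
    (hΩproper : Ω ≠ Set.univ) (hΩne : Ω.Nonempty)
    (ε : ℝ) (hε : ε ∈ Set.Ioc (0 : ℝ) 1)
    (u : EuclideanSpace ℂ (Fin n) → ℝ)
    (hupsh : PSH Ω u) (hucont : ContinuousOn u (closure Ω))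
    (huholder : ∃ C > (0 : ℝ), ∀ x ∈ closure Ω, ∀ y ∈ closure Ω,
      |u x - u y| ≤ C * ‖x - y‖ ^ ε)
    (humax : ∀ v : EuclideanSpace ℂ (Fin n) → ℝ, PSH Ω v → ContinuousOn v (closure Ω) →
      (∀ ζ ∈ frontier Ω, v ζ ≤ u ζ) → ∀ z ∈ Ω, v z ≤ u z)
    (hubdry : ∀ ζ ∈ frontier Ω, u ζ = -‖ζ‖ ^ 2) :
    PSH Ω (fun z => u z + ‖z‖ ^ 2) ∧
      (∃ C > (0 : ℝ), ∀ x ∈ closure Ω, ∀ y ∈ closure Ω,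
        |(u x + ‖x‖ ^ 2) - (u y + ‖y‖ ^ 2)| ≤ C * ‖x - y‖ ^ ε) ∧
      (∀ ζ ∈ frontier Ω, u ζ + ‖ζ‖ ^ 2 = 0) ∧
      (∀ z ∈ Ω, u z + ‖z‖ ^ 2 < 0) ∧
      PSH Ω (fun z => (u z + ‖z‖ ^ 2) - ‖z‖ ^ 2) :=
  defining_function_from_holder_solution_general hn Ω hΩopen hΩbdd ε hε u hupsh hucont huholder
    humax hubdry
end
end
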